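/- arXiv:0801.2957 — 4 statements merged into one kernel-verified Lean document; each statement's English description precedes it below -/
import Mathlib

section
/- For every integer d ≥ 1 there exists a constant C, depending only on d, such that the following holds. Let m : ℝ → ℂ be a (d+2)-times continuously differentiable function supported in [-2,-1/2] ∪ [1/2,2] and satisfying |m^{(α)}(λ)| ≤ 1 for all integers 0 ≤ α ≤ d+2 and all λ ∈ ℝ. Then for all real numbers A and B: (i) if B ≠ 0 and 1/10 ≤ |A/B| ≤ 10, then |∫_ℝ e^{i(Aλ² + Bλ)} m(λ) dλ| ≤ C (1+|A|)^{-1/2}; (ii) if |A| < |B|/10 or |A| > 10|B|, then |∫_ℝ e^{i(Aλ² + Bλ)} m(λ) dλ| ≤ C (1+|A|+|B|)^{-d}. -/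
/-!
Write `e(x) = exp (i (A x² + B x))`, so that `e' = P e` with `P(x) = i (2 A x + B)` affine.
Integrating by parts against `e` turns `∫ e u` into `-∫ e (u / P)'` up to boundary terms, and
the `k`-th iterate of `u ↦ (u / P)'` is an explicit combination of the terms
`u⁽ʲ⁾ (P')ᵏ⁻ʲ P ^ (j - 2k)`, hence of size `ρ⁻ᵏ` wherever `|P| ≥ ρ` and `|P'| ≲ ρ`.

(ii) When `|A|` and `|B|` are far apart, `|P| ≳ |A| + |B|` on `1/4 ≤ |x| ≤ 3`, an annulus
containing the support of `m` whose endpoints lie outside it, so `d` integrations by parts leave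
no boundary terms and give the decay `(|A| + |B|)⁻ᵈ`.

(i) Otherwise the stationary point `x₀ = -B / (2A)` stays bounded. The window
`|x - x₀| < |A|^(-1/2)` contributes `O(|A|^(-1/2))` trivially; outside it a single integration
by parts, with `|P(x)| = 2 |A| |x - x₀|`, gives the same bound.

For small `|A|` (resp. `|A| + |B|`) the trivial bound suffices.
-/

open Set Finset Function MeasureTheory intervalIntegral
open scoped Interval

theorem integral_mul_eq_sub_integral_mul_deriv_div {E P w w₁ : ℝ → ℂ} {a b : ℝ}
    (hE : ∀ x ∈ [[a, b]], HasDerivAt E (P x * E x) x) (hP : ∀ x ∈ [[a, b]], P x ≠ 0)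
    (hw : ∀ x ∈ [[a, b]], HasDerivAt (fun y => w y / P y) (w₁ x) x)
    (hPE : IntervalIntegrable (fun x => P x * E x) volume a b)
    (hw₁ : IntervalIntegrable w₁ volume a b) :
    ∫ x in a..b, E x * w x = E b * (w b / P b) - E a * (w a / P a) - ∫ x in a..b, E x * w₁ x := by
  have hibp := integral_mul_deriv_eq_deriv_mul hw hE hw₁ hPE
  have hcongr : EqOn (fun x => w x / P x * (P x * E x)) (fun x => E x * w x) [[a, b]] :=
    fun x hx => by field_simp [hP x hx]
  rw [integral_congr hcongr] at hibp
  simp only [mul_comm (E _)] at hibp ⊢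
  rw [hibp]

/-- For `P' = c`, the `k`-th iterate of `u ↦ (u / P)'` is
`∑ j ≤ k, ibpCoeff k j * c ^ (k - j) * u⁽ʲ⁾ * P ^ (j - 2k)`, i.e. `ibpIter P c k u`
(see `hasDerivAt_ibpIter_div`). -/
def ibpCoeff : ℕ → ℕ → ℤ
  | 0, j => if j = 0 then 1 else 0
  | k + 1, j => (if j = 0 then 0 else ibpCoeff k (j - 1)) + ((j : ℤ) - (2 * k + 1)) * ibpCoeff k j

theorem ibpCoeff_eq_zero_of_lt {k j : ℕ} (h : k < j) : ibpCoeff k j = 0 := by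
  induction k generalizing j with
  | zero => simp [ibpCoeff, Nat.pos_iff_ne_zero.mp h]
  | succ k ih =>
    rw [ibpCoeff, if_neg (by omega), ih (by omega), ih (by omega), mul_zero, add_zero]

noncomputable def ibpIter (P : ℝ → ℂ) (c : ℂ) (k : ℕ) (u : ℝ → ℂ) (x : ℝ) : ℂ :=
  ∑ j ∈ range (k + 1), (ibpCoeff k j : ℂ) * c ^ (k - j) * iteratedDeriv j u x *
    P x ^ ((j : ℤ) - 2 * k)

section ibpIter

variable {P u : ℝ → ℂ} {c : ℂ}

@[simp]
theorem ibpIter_zero : ibpIter P c 0 u = u := by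
  ext x; simp [ibpIter, ibpCoeff]

theorem ibpIter_succ (k : ℕ) (x : ℝ) :
    ibpIter P c (k + 1) u x = ∑ j ∈ range (k + 1), (ibpCoeff k j : ℂ) * c ^ (k - j) *
      (iteratedDeriv (j + 1) u x * P x ^ ((j : ℤ) - 2 * k - 1) +
        iteratedDeriv j u x *
          (((j : ℤ) - 2 * k - 1 : ℤ) * P x ^ ((j : ℤ) - 2 * k - 1 - 1) * c)) := by
  simp only [ibpIter, ibpCoeff, Int.cast_add, add_mul, sum_add_distrib, mul_add]
  congr 1
  · rw [sum_range_succ']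
    simp only [if_pos, Int.cast_zero, zero_mul, add_zero, Nat.add_sub_cancel,
      if_neg (Nat.succ_ne_zero _)]
    refine sum_congr rfl fun j _ => ?_
    rw [Nat.add_sub_add_right]
    push_cast
    ring_nf
  · rw [sum_range_succ, ibpCoeff_eq_zero_of_lt (Nat.lt_succ_self k)]
    simp only [Int.cast_zero, mul_zero, zero_mul, add_zero]
    refine sum_congr rfl fun j hj => ?_
    rw [show k + 1 - j = k - j + 1 by have := mem_range.mp hj; omega, pow_succ]
    push_cast
    ring_nf

theorem hasDerivAt_ibpIter_div {k : ℕ} {x : ℝ} (hP : ∀ y, HasDerivAt P c y)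
    (hu : ContDiff ℝ (k + 1 : ℕ) u) (hx : P x ≠ 0) :
    HasDerivAt (fun y => ibpIter P c k u y / P y) (ibpIter P c (k + 1) u x) x := by
  have hdiv : (fun y => ibpIter P c k u y / P y) =ᶠ[nhds x] fun y =>
      ∑ j ∈ range (k + 1), (ibpCoeff k j : ℂ) * c ^ (k - j) *
        (iteratedDeriv j u y * P y ^ ((j : ℤ) - 2 * k - 1)) := by
    filter_upwards [(hP x).continuousAt.eventually_ne hx] with y hy
    rw [ibpIter, sum_div]
    refine sum_congr rfl fun j _ => ?_
    rw [zpow_sub_one₀ hy]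
    ring
  rw [ibpIter_succ]
  refine (HasDerivAt.fun_sum fun j hj => ?_).congr_of_eventuallyEq hdiv
  have hj : j < k + 1 := mem_range.mp hj
  have hder : HasDerivAt (iteratedDeriv j u) (iteratedDeriv (j + 1) u x) x := by
    rw [iteratedDeriv_succ]
    exact ((hu.differentiable_iteratedDeriv j (by exact_mod_cast hj)) x).hasDerivAt
  have hpow := (hasDerivAt_zpow ((j : ℤ) - 2 * k - 1) (P x) (Or.inl hx)).comp x (hP x)
  exact (hder.mul hpow).const_mul _

theorem continuousOn_ibpIter {k : ℕ} (hP : Continuous P) (hu : ContDiff ℝ k u) :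
    ContinuousOn (ibpIter P c k u) {x | P x ≠ 0} := by
  refine continuousOn_finsetSum _ fun j hj => ?_
  have hj : j ≤ k := Nat.lt_succ_iff.mp (mem_range.mp hj)
  exact (continuousOn_const.mul
    (hu.continuous_iteratedDeriv j (by exact_mod_cast hj)).continuousOn).mul
      (hP.continuousOn.zpow₀ _ fun x hx => Or.inl hx)

theorem ibpIter_eq_zero {k : ℕ} {x : ℝ} (hu : ∀ j ≤ k, iteratedDeriv j u x = 0) :
    ibpIter P c k u x = 0 :=
  sum_eq_zero fun j hj => by rw [hu j (Nat.lt_succ_iff.mp (mem_range.mp hj))]; ring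

theorem norm_ibpIter_le_sum {k : ℕ} {x : ℝ} (hu : ∀ j ≤ k, ‖iteratedDeriv j u x‖ ≤ 1) :
    ‖ibpIter P c k u x‖ ≤
      ∑ j ∈ range (k + 1), |(ibpCoeff k j : ℝ)| * ‖c‖ ^ (k - j) * ‖P x‖ ^ ((j : ℤ) - 2 * k) := by
  refine (norm_sum_le _ _).trans (sum_le_sum fun j hj => ?_)
  rw [norm_mul, norm_mul, norm_mul, norm_pow, norm_zpow, Complex.norm_intCast]
  have := hu j (Nat.lt_succ_iff.mp (mem_range.mp hj))
  calc _ ≤ |(ibpCoeff k j : ℝ)| * ‖c‖ ^ (k - j) * 1 * ‖P x‖ ^ ((j : ℤ) - 2 * k) := by gcongr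
    _ = _ := by rw [mul_one]

theorem norm_ibpIter_le {k : ℕ} {x ρ K : ℝ} (hu : ∀ j ≤ k, ‖iteratedDeriv j u x‖ ≤ 1)
    (hρ : 0 < ρ) (hPx : ρ ≤ ‖P x‖) (hc : ‖c‖ ≤ K * ρ) (hK : 1 ≤ K) :
    ‖ibpIter P c k u x‖ ≤ (∑ j ∈ range (k + 1), |(ibpCoeff k j : ℝ)|) * K ^ k / ρ ^ k := by
  rw [sum_mul, sum_div]
  refine (norm_ibpIter_le_sum hu).trans (sum_le_sum fun j hj => ?_)
  have hj : j ≤ k := Nat.lt_succ_iff.mp (mem_range.mp hj)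
  have hexp : (j : ℤ) - 2 * k = -((2 * k - j : ℕ) : ℤ) := by
    push_cast [Nat.cast_sub (by omega : j ≤ 2 * k)]
    ring
  rw [hexp, zpow_neg, zpow_natCast, mul_assoc, mul_div_assoc]
  gcongr
  calc ‖c‖ ^ (k - j) * (‖P x‖ ^ (2 * k - j))⁻¹ ≤ (K * ρ) ^ (k - j) * (ρ ^ (2 * k - j))⁻¹ := by
        gcongr
    _ = K ^ (k - j) / ρ ^ k := by
        rw [show 2 * k - j = (k - j) + k by omega, pow_add, mul_pow]
        field_simp
    _ ≤ K ^ k / ρ ^ k := by gcongr; exact Nat.sub_le k j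

theorem norm_ibpIter_one_le {x : ℝ} (hu₀ : ‖u x‖ ≤ 1) (hu₁ : ‖deriv u x‖ ≤ 1) :
    ‖ibpIter P c 1 u x‖ ≤ ‖c‖ / ‖P x‖ ^ 2 + 1 / ‖P x‖ := by
  have hu : ∀ j ≤ 1, ‖iteratedDeriv j u x‖ ≤ 1 := by
    intro j hj
    interval_cases j <;> simpa
  refine (norm_ibpIter_le_sum hu).trans (le_of_eq ?_)
  simp [sum_range_succ, ibpCoeff, zpow_neg, div_eq_mul_inv]

theorem integral_mul_ibpIter_eq {E : ℝ → ℂ} {a b : ℝ} {k : ℕ}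
    (hE : ∀ x ∈ [[a, b]], HasDerivAt E (P x * E x) x) (hP : ∀ x, HasDerivAt P c x)
    (hP₀ : ∀ x ∈ [[a, b]], P x ≠ 0) (hu : ContDiff ℝ (k + 1 : ℕ) u) :
    ∫ x in a..b, E x * ibpIter P c k u x =
      E b * (ibpIter P c k u b / P b) - E a * (ibpIter P c k u a / P a) -
        ∫ x in a..b, E x * ibpIter P c (k + 1) u x := by
  have hPc : Continuous P := continuous_iff_continuousAt.mpr fun x => (hP x).continuousAt
  have hEc : ContinuousOn E [[a, b]] := fun x hx => (hE x hx).continuousAt.continuousWithinAt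
  exact integral_mul_eq_sub_integral_mul_deriv_div hE hP₀
    (fun x hx => hasDerivAt_ibpIter_div hP hu (hP₀ x hx))
    (hPc.continuousOn.mul hEc).intervalIntegrable
    ((continuousOn_ibpIter hPc hu).mono hP₀).intervalIntegrable

theorem integral_mul_eq_neg_one_pow_mul_integral_ibpIter {E : ℝ → ℂ} {a b : ℝ} {n : ℕ}
    (hE : ∀ x ∈ [[a, b]], HasDerivAt E (P x * E x) x) (hP : ∀ x, HasDerivAt P c x)
    (hP₀ : ∀ x ∈ [[a, b]], P x ≠ 0) (hu : ContDiff ℝ n u)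
    (hua : ∀ j < n, iteratedDeriv j u a = 0) (hub : ∀ j < n, iteratedDeriv j u b = 0) :
    ∫ x in a..b, E x * u x = (-1) ^ n * ∫ x in a..b, E x * ibpIter P c n u x := by
  suffices ∀ k ≤ n, ∫ x in a..b, E x * u x = (-1) ^ k * ∫ x in a..b, E x * ibpIter P c k u x from
    this n le_rfl
  intro k hk
  induction k with
  | zero => simp
  | succ k ih =>
    rw [ih (by omega), integral_mul_ibpIter_eq hE hP hP₀ (hu.of_le (by exact_mod_cast hk)),
      ibpIter_eq_zero fun j hj => hua j (by omega), ibpIter_eq_zero fun j hj => hub j (by omega),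
      pow_succ]
    ring

end ibpIter

noncomputable def chirp (A B x : ℝ) : ℂ :=
  Complex.exp (Complex.I * ((A : ℂ) * (x : ℂ) ^ 2 + (B : ℂ) * (x : ℂ)))

noncomputable def chirpLogDeriv (A B x : ℝ) : ℂ := Complex.I * ((2 * A * x + B : ℝ) : ℂ)

section chirp

variable {A B x : ℝ}

@[simp]
theorem norm_chirp : ‖chirp A B x‖ = 1 := by
  rw [chirp, show Complex.I * ((A : ℂ) * (x : ℂ) ^ 2 + (B : ℂ) * (x : ℂ)) =
    ((A * x ^ 2 + B * x : ℝ) : ℂ) * Complex.I by push_cast; ring]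
  exact Complex.norm_exp_ofReal_mul_I _

theorem continuous_chirp : Continuous (chirp A B) := by
  unfold chirp; fun_prop

theorem hasDerivAt_chirp : HasDerivAt (chirp A B) (chirpLogDeriv A B x * chirp A B x) x := by
  have h : HasDerivAt (fun y : ℝ => Complex.I * ((A : ℂ) * (y : ℂ) ^ 2 + (B : ℂ) * (y : ℂ)))
      (chirpLogDeriv A B x) x := by
    have := (((hasDerivAt_id (x : ℂ)).pow 2).const_mul (A : ℂ)).add
      ((hasDerivAt_id (x : ℂ)).const_mul (B : ℂ)) |>.const_mul Complex.I |>.comp_ofReal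
    refine this.congr_deriv ?_
    simp only [chirpLogDeriv, id]
    push_cast
    ring
  exact h.cexp.congr_deriv (mul_comm _ _)

theorem hasDerivAt_chirpLogDeriv :
    HasDerivAt (chirpLogDeriv A B) (Complex.I * ((2 * A : ℝ) : ℂ)) x := by
  have := (((hasDerivAt_id x).const_mul (2 * A)).add_const B).ofReal_comp.const_mul Complex.I
  exact this.congr_deriv (by push_cast; ring)

theorem norm_chirpLogDeriv : ‖chirpLogDeriv A B x‖ = |2 * A * x + B| := by
  rw [chirpLogDeriv, norm_mul, Complex.norm_I, one_mul, Complex.norm_real, Real.norm_eq_abs]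

end chirp

theorem iteratedDeriv_eq_zero_of_notMem_tsupport {𝕜 F : Type*} [NontriviallyNormedField 𝕜]
    [NormedAddCommGroup F] [NormedSpace 𝕜 F] {f : 𝕜 → F} {x : 𝕜} (n : ℕ)
    (hx : x ∉ tsupport f) : iteratedDeriv n f x = 0 := by
  rw [iteratedDeriv_eq_iteratedFDeriv,
    Function.notMem_support.mp fun h => hx (support_iteratedFDeriv_subset n h)]
  rfl

theorem integral_eq_add_add_of_support_subset {F : Type*} [NormedAddCommGroup F]
    [NormedSpace ℝ F] [CompleteSpace F] {f : ℝ → F} {a d : ℝ} (hf : Integrable f)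
    (hsupp : support f ⊆ Ioc a d) (b c : ℝ) :
    ∫ x, f x = (∫ x in a..b, f x) + (∫ x in b..c, f x) + ∫ x in c..d, f x := by
  rw [← integral_eq_integral_of_support_subset hsupp,
    integral_add_adjacent_intervals (hf.intervalIntegrable) (hf.intervalIntegrable),
    integral_add_adjacent_intervals (hf.intervalIntegrable) (hf.intervalIntegrable)]

section chirpIntegral

variable {A B : ℝ} {m : ℝ → ℂ}

theorem integrable_chirp_mul (hm : Continuous m) (hm' : HasCompactSupport m) :
    Integrable (fun x => chirp A B x * m x) :=
  (continuous_chirp.mul hm).integrable_of_hasCompactSupport hm'.mul_left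

theorem norm_integral_chirp_mul_le {a b : ℝ} (hsupp : support m ⊆ Ioc a b)
    (hm : ∀ x, ‖m x‖ ≤ 1) : ‖∫ x, chirp A B x * m x‖ ≤ |b - a| := by
  rw [← integral_eq_integral_of_support_subset
    ((support_mul_subset_right (chirp A B) m).trans hsupp)]
  simpa using norm_integral_le_of_norm_le_const (a := a) (b := b)
    (f := fun x => chirp A B x * m x) (C := 1) fun x _ => by simpa using hm x

end chirpIntegral

theorem le_mul_one_add_rpow_neg {X M K s r : ℝ} (hX : 0 ≤ X) (hs : 0 ≤ s) (hr : 0 ≤ r)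
    (hM : X ≤ M) (hK : 1 ≤ s → X ≤ K * s ^ (-r)) : X ≤ 2 ^ r * max M K * (1 + s) ^ (-r) := by
  have h2 : (0 : ℝ) < 2 ^ r := by positivity
  have hmax : 0 ≤ max M K := (hX.trans hM).trans (le_max_left M K)
  rw [Real.rpow_neg (by linarith), ← div_eq_mul_inv, le_div_iff₀ (by positivity)]
  rcases le_total s 1 with hs1 | hs1
  · calc X * (1 + s) ^ r ≤ max M K * 2 ^ r := by
          gcongr
          · exact hM.trans (le_max_left M K)
          · linarith
      _ = 2 ^ r * max M K := mul_comm _ _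
  · have hsr : 0 < s ^ r := by positivity
    have hXK : X * s ^ r ≤ max M K := by
      have := hK hs1
      rw [Real.rpow_neg hs, ← div_eq_mul_inv, le_div_iff₀ hsr] at this
      exact this.trans (le_max_right M K)
    calc X * (1 + s) ^ r ≤ X * (2 * s) ^ r := by gcongr; linarith
      _ = 2 ^ r * (X * s ^ r) := by rw [Real.mul_rpow zero_le_two hs]; ring
      _ ≤ 2 ^ r * max M K := by gcongr

theorem integral_inv_sq_sub_le {a b x₀ δ : ℝ} (hab : a ≤ b) (hδ : 0 < δ)
    (hsep : x₀ + δ ≤ a ∨ b ≤ x₀ - δ) : ∫ x in a..b, ((x - x₀) ^ 2)⁻¹ ≤ δ⁻¹ := by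
  have h0 : (0 : ℝ) ∉ [[a - x₀, b - x₀]] := by
    rw [Set.uIcc_of_le (by linarith)]
    rintro ⟨h₁, h₂⟩
    rcases hsep with h | h <;> linarith
  have hint : ∫ x in a..b, ((x - x₀) ^ 2)⁻¹ = (a - x₀)⁻¹ - (b - x₀)⁻¹ := by
    have := integral_zpow (a := a - x₀) (b := b - x₀) (Or.inr ⟨by norm_num, h0⟩) (n := -2)
    rw [← integral_comp_sub_right] at this
    norm_num at this
    rw [this]
    ring
  rw [hint]
  rcases hsep with h | h
  · have : 0 ≤ (b - x₀)⁻¹ := inv_nonneg.mpr (by linarith)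
    have : (a - x₀)⁻¹ ≤ δ⁻¹ := inv_anti₀ hδ (by linarith)
    linarith
  · have : (a - x₀)⁻¹ ≤ 0 := inv_nonpos.mpr (by linarith)
    have : (x₀ - b)⁻¹ ≤ δ⁻¹ := inv_anti₀ hδ (by linarith)
    rw [← neg_sub x₀ b, inv_neg]
    linarith

theorem norm_chirpLogDeriv_of_stationary {A B x₀ : ℝ} (hx₀ : 2 * A * x₀ + B = 0) (x : ℝ) :
    ‖chirpLogDeriv A B x‖ = 2 * |A| * |x - x₀| := by
  rw [norm_chirpLogDeriv, show 2 * A * x + B = 2 * A * (x - x₀) by linarith, abs_mul, abs_mul,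
    abs_two]

theorem norm_ibpIter_one_chirpLogDeriv_le {A B x₀ R x : ℝ} {m : ℝ → ℂ}
    (hx₀ : 2 * A * x₀ + B = 0) (hx : 0 < |x - x₀|) (hxR : |x - x₀| ≤ R)
    (hm₀ : ‖m x‖ ≤ 1) (hm₁ : ‖deriv m x‖ ≤ 1) :
    ‖ibpIter (chirpLogDeriv A B) (Complex.I * ((2 * A : ℝ) : ℂ)) 1 m x‖ ≤
      (1 + R) / (2 * |A|) * ((x - x₀) ^ 2)⁻¹ := by
  rw [← sq_abs]
  calc _ ≤ _ := norm_ibpIter_one_le hm₀ hm₁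
    _ = (1 + |x - x₀|) / (2 * |A|) * (|x - x₀| ^ 2)⁻¹ := by
      rw [norm_chirpLogDeriv_of_stationary hx₀, norm_mul, Complex.norm_I, one_mul,
        Complex.norm_real, Real.norm_eq_abs, abs_mul, abs_two]
      field_simp
    _ ≤ _ := by gcongr

theorem norm_intervalIntegral_chirp_mul_le_of_separated {A B a b x₀ δ R : ℝ} {m : ℝ → ℂ}
    (hA : A ≠ 0) (hx₀ : 2 * A * x₀ + B = 0) (hab : a ≤ b) (hδ : 0 < δ)
    (hsep : x₀ + δ ≤ a ∨ b ≤ x₀ - δ) (hR : ∀ x ∈ Icc a b, |x - x₀| ≤ R) (hm : ContDiff ℝ 1 m)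
    (hm₀ : ∀ x, ‖m x‖ ≤ 1) (hm₁ : ∀ x, ‖deriv m x‖ ≤ 1) :
    ‖∫ x in a..b, chirp A B x * m x‖ ≤ (3 + R) / (2 * |A| * δ) := by
  have hdist : ∀ x ∈ [[a, b]], δ ≤ |x - x₀| := fun x hx => by
    rw [Set.uIcc_of_le hab] at hx
    rcases hsep with h | h
    · exact (by linarith [hx.1] : δ ≤ x - x₀).trans (le_abs_self _)
    · exact (by linarith [hx.2] : δ ≤ -(x - x₀)).trans (neg_le_abs _)
  have hPδ : ∀ x ∈ [[a, b]], 2 * |A| * δ ≤ ‖chirpLogDeriv A B x‖ := fun x hx => by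
    rw [norm_chirpLogDeriv_of_stationary hx₀]; gcongr; exact hdist x hx
  have hP₀ : ∀ x ∈ [[a, b]], chirpLogDeriv A B x ≠ 0 := fun x hx =>
    norm_pos_iff.mp ((by positivity : 0 < 2 * |A| * δ).trans_le (hPδ x hx))
  have hibp := integral_mul_ibpIter_eq (k := 0) (fun x _ => hasDerivAt_chirp)
    (fun x => hasDerivAt_chirpLogDeriv) hP₀ (u := m) hm
  simp only [ibpIter_zero, zero_add] at hibp
  have hbdry : ∀ x ∈ [[a, b]], ‖chirp A B x * (m x / chirpLogDeriv A B x)‖ ≤ 1 / (2 * |A| * δ) :=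
    fun x hx => by
      rw [norm_mul, norm_chirp, one_mul, norm_div]
      exact div_le_div₀ zero_le_one (hm₀ x) (by positivity) (hPδ x hx)
  have hint : ‖∫ x in a..b, chirp A B x *
      ibpIter (chirpLogDeriv A B) (Complex.I * ((2 * A : ℝ) : ℂ)) 1 m x‖ ≤
        (1 + R) / (2 * |A|) * δ⁻¹ := by
    have hx₀ab : ∀ x ∈ [[a, b]], (x - x₀) ^ 2 ≠ 0 := fun x hx =>
      pow_ne_zero 2 (abs_pos.mp (hδ.trans_le (hdist x hx)))
    refine (intervalIntegral.norm_integral_le_of_norm_le hab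
      (g := fun x => (1 + R) / (2 * |A|) * ((x - x₀) ^ 2)⁻¹) (ae_of_all _ fun x hx => ?_)
      (ContinuousOn.intervalIntegrable (continuousOn_const.mul
        ((by fun_prop : Continuous fun x : ℝ => (x - x₀) ^ 2).continuousOn.inv₀ hx₀ab)))).trans ?_
    · have hx : x ∈ [[a, b]] := Set.uIcc_of_le hab ▸ Ioc_subset_Icc_self hx
      rw [norm_mul, norm_chirp, one_mul]
      exact norm_ibpIter_one_chirpLogDeriv_le hx₀ (hδ.trans_le (hdist x hx))
        (hR x (Set.uIcc_of_le hab ▸ hx)) (hm₀ x) (hm₁ x)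
    · have : 0 ≤ 1 + R := by linarith [abs_nonneg (a - x₀), hR a ⟨le_rfl, hab⟩]
      rw [intervalIntegral.integral_const_mul]
      gcongr
      exact integral_inv_sq_sub_le hab hδ hsep
  rw [hibp]
  calc _ ≤ ‖chirp A B b * (m b / chirpLogDeriv A B b)‖ +
          ‖chirp A B a * (m a / chirpLogDeriv A B a)‖ +
        ‖∫ x in a..b, chirp A B x *
          ibpIter (chirpLogDeriv A B) (Complex.I * ((2 * A : ℝ) : ℂ)) 1 m x‖ :=
        (norm_sub_le _ _).trans (by gcongr; exact norm_sub_le _ _)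
    _ ≤ 1 / (2 * |A| * δ) + 1 / (2 * |A| * δ) + (1 + R) / (2 * |A|) * δ⁻¹ := by
        gcongr
        exacts [hbdry b right_mem_uIcc, hbdry a left_mem_uIcc]
    _ = (3 + R) / (2 * |A| * δ) := by field_simp; ring

theorem norm_integral_chirp_mul_le_of_stationary {A B : ℝ} {m : ℝ → ℂ} (hA : 1 ≤ |A|)
    (hB : |B| ≤ 10 * |A|) (hm : ContDiff ℝ 1 m) (hsupp : support m ⊆ Icc (-2) 2)
    (hm₀ : ∀ x, ‖m x‖ ≤ 1) (hm₁ : ∀ x, ‖deriv m x‖ ≤ 1) :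
    ‖∫ x, chirp A B x * m x‖ ≤ 17 / √|A| := by
  have hA₀ : A ≠ 0 := abs_pos.mp (by linarith)
  set x₀ := -B / (2 * A)
  have hx₀ : 2 * A * x₀ + B = 0 := by simp only [x₀]; field_simp; ring
  have hx₀5 : |x₀| ≤ 5 := by
    rw [abs_div, abs_neg, abs_mul, abs_two, div_le_iff₀ (by positivity)]
    linarith
  have hsqrt : 1 ≤ √|A| := Real.one_le_sqrt.mpr hA
  -- `δ = |A|^(-1/2)` balances the trivial bound `2δ` on the window around `x₀` against the
  -- bound `O(1 / (|A| δ))` from integrating by parts outside it.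
  set δ := (√|A|)⁻¹
  have hδ : 0 < δ := by positivity
  have hδ1 : δ ≤ 1 := inv_le_one_of_one_le₀ hsqrt
  have hx₀' := abs_le.mp hx₀5
  have hint : Integrable fun x => chirp A B x * m x :=
    integrable_chirp_mul hm.continuous
      (HasCompactSupport.of_support_subset_isCompact isCompact_Icc hsupp)
  have hsupp' : support (fun x => chirp A B x * m x) ⊆ Ioc (-7) 7 :=
    (support_mul_subset_right _ _).trans (hsupp.trans (Icc_subset_Ioc (by norm_num) (by norm_num)))
  rw [integral_eq_add_add_of_support_subset hint hsupp' (x₀ - δ) (x₀ + δ)]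
  have hleft := norm_intervalIntegral_chirp_mul_le_of_separated (a := -7) (b := x₀ - δ) (R := 12)
    hA₀ hx₀ (by linarith) hδ (Or.inr le_rfl)
    (fun x hx => abs_le.mpr ⟨by linarith [hx.1], by linarith [hx.2]⟩) hm hm₀ hm₁
  have hright := norm_intervalIntegral_chirp_mul_le_of_separated (a := x₀ + δ) (b := 7) (R := 12)
    hA₀ hx₀ (by linarith) hδ (Or.inl le_rfl)
    (fun x hx => abs_le.mpr ⟨by linarith [hx.1], by linarith [hx.2]⟩) hm hm₀ hm₁
  have hmid : ‖∫ x in (x₀ - δ)..(x₀ + δ), chirp A B x * m x‖ ≤ 1 * |x₀ + δ - (x₀ - δ)| :=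
    norm_integral_le_of_norm_le_const fun x _ => by simpa using hm₀ x
  rw [one_mul, show x₀ + δ - (x₀ - δ) = 2 * δ by ring, abs_of_pos (by positivity)] at hmid
  calc _ ≤ _ := norm_add₃_le
    _ ≤ (3 + 12) / (2 * |A| * δ) + 2 * δ + (3 + 12) / (2 * |A| * δ) := by gcongr
    _ = 17 / √|A| := by
        have hsq : 2 * |A| = 2 * √|A| * √|A| := by
          rw [mul_assoc, Real.mul_self_sqrt (abs_nonneg A)]
        rw [hsq]
        simp only [δ]
        field_simp
        ring

theorem exists_norm_integral_chirp_mul_le_of_stationary :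
    ∃ C : ℝ, ∀ m : ℝ → ℂ, ContDiff ℝ 1 m → support m ⊆ Icc (-2) 2 → (∀ x, ‖m x‖ ≤ 1) →
      (∀ x, ‖deriv m x‖ ≤ 1) → ∀ A B : ℝ, |B| ≤ 10 * |A| →
      ‖∫ x, chirp A B x * m x‖ ≤ C * (1 + |A|) ^ (-(1 : ℝ) / 2) := by
  refine ⟨2 ^ (1 / 2 : ℝ) * max 6 17, fun m hm hsupp hm₀ hm₁ A B hB => ?_⟩
  rw [neg_div]
  refine le_mul_one_add_rpow_neg (norm_nonneg _) (abs_nonneg A) (by norm_num)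
    ((norm_integral_chirp_mul_le (a := -3) (b := 3)
      (hsupp.trans (Icc_subset_Ioc (by norm_num) (by norm_num)))
      hm₀).trans_eq (by norm_num)) fun hA => ?_
  rw [Real.rpow_neg (abs_nonneg A), ← Real.sqrt_eq_rpow, ← div_eq_mul_inv]
  exact norm_integral_chirp_mul_le_of_stationary hA hB hm hsupp hm₀ hm₁

theorem le_abs_two_mul_add_of_nonstationary {A B x : ℝ} (hx₁ : 1 / 4 ≤ |x|) (hx₂ : |x| ≤ 3)
    (h : |A| < |B| / 10 ∨ 10 * |B| < |A|) : (|A| + |B|) / 4 ≤ |2 * A * x + B| := by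
  have hAx : |2 * A * x| = 2 * |A| * |x| := by rw [abs_mul, abs_mul, abs_two]
  have h₁ := abs_sub_abs_le_abs_sub B (-(2 * A * x))
  have h₂ := abs_sub_abs_le_abs_sub (2 * A * x) (-B)
  rw [abs_neg, sub_neg_eq_add, add_comm] at h₁
  rw [abs_neg, sub_neg_eq_add] at h₂
  rcases h with h | h <;> nlinarith [abs_nonneg A, abs_nonneg B]

theorem norm_intervalIntegral_chirp_mul_le_of_nonstationary {A B a b ρ K : ℝ} {m : ℝ → ℂ}
    {d : ℕ} (hab : a ≤ b) (hm : ContDiff ℝ d m) (hmd : ∀ j ≤ d, ∀ x, ‖iteratedDeriv j m x‖ ≤ 1)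
    (ha : ∀ j < d, iteratedDeriv j m a = 0) (hb : ∀ j < d, iteratedDeriv j m b = 0)
    (hρ : 0 < ρ) (hphase : ∀ x ∈ Icc a b, ρ ≤ |2 * A * x + B|) (hA : 2 * |A| ≤ K * ρ)
    (hK : 1 ≤ K) :
    ‖∫ x in a..b, chirp A B x * m x‖ ≤
      (∑ j ∈ range (d + 1), |(ibpCoeff d j : ℝ)|) * K ^ d / ρ ^ d * (b - a) := by
  have hP₀ : ∀ x ∈ [[a, b]], chirpLogDeriv A B x ≠ 0 := fun x hx h => by
    have := hphase x (Set.uIcc_of_le hab ▸ hx)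
    rw [← norm_chirpLogDeriv, h, norm_zero] at this
    linarith
  rw [integral_mul_eq_neg_one_pow_mul_integral_ibpIter (fun x _ => hasDerivAt_chirp)
    (fun x => hasDerivAt_chirpLogDeriv) hP₀ hm ha hb, norm_mul, norm_pow, norm_neg, norm_one,
    one_pow, one_mul, ← abs_of_nonneg (sub_nonneg.mpr hab)]
  refine norm_integral_le_of_norm_le_const fun x hx => ?_
  have hx : x ∈ Icc a b := Ioc_subset_Icc_self (uIoc_of_le hab ▸ hx)
  rw [norm_mul, norm_chirp, one_mul]
  refine norm_ibpIter_le (fun j hj => hmd j hj x) hρ ?_ ?_ hK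
  · rw [norm_chirpLogDeriv]; exact hphase x hx
  · simpa [abs_mul] using hA

theorem norm_intervalIntegral_chirp_mul_le_of_annulus {A B a b : ℝ} {m : ℝ → ℂ} {d : ℕ}
    (hab : a ≤ b) (hm : ContDiff ℝ d m) (hmd : ∀ j ≤ d, ∀ x, ‖iteratedDeriv j m x‖ ≤ 1)
    (ha : ∀ j < d, iteratedDeriv j m a = 0) (hb : ∀ j < d, iteratedDeriv j m b = 0)
    (hannulus : ∀ x ∈ Icc a b, 1 / 4 ≤ |x| ∧ |x| ≤ 3) (h : |A| < |B| / 10 ∨ 10 * |B| < |A|) :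
    ‖∫ x in a..b, chirp A B x * m x‖ ≤
      (∑ j ∈ range (d + 1), |(ibpCoeff d j : ℝ)|) * 32 ^ d / (|A| + |B|) ^ d * (b - a) := by
  have hs : 0 < |A| + |B| := by rcases h with h | h <;> linarith [abs_nonneg A, abs_nonneg B]
  convert norm_intervalIntegral_chirp_mul_le_of_nonstationary (K := 8) hab hm hmd ha hb
    (by positivity) (fun x hx => le_abs_two_mul_add_of_nonstationary (hannulus x hx).1
      (hannulus x hx).2 h) (by linarith [abs_nonneg B]) (by norm_num) using 2
  rw [div_pow, show (32 : ℝ) ^ d = 8 ^ d * 4 ^ d by rw [← mul_pow]; norm_num]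
  field_simp

theorem norm_integral_chirp_mul_le_of_nonstationary {A B : ℝ} {m : ℝ → ℂ} {d : ℕ}
    (hm : ContDiff ℝ d m) (hsupp : support m ⊆ Icc (-2) (-1 / 2) ∪ Icc (1 / 2) 2)
    (hmd : ∀ j ≤ d, ∀ x, ‖iteratedDeriv j m x‖ ≤ 1) (h : |A| < |B| / 10 ∨ 10 * |B| < |A|) :
    ‖∫ x, chirp A B x * m x‖ ≤
      11 / 2 * (∑ j ∈ range (d + 1), |(ibpCoeff d j : ℝ)|) * 32 ^ d / (|A| + |B|) ^ d := by
  have hvan : ∀ x : ℝ, x ∉ Icc (-2 : ℝ) (-1 / 2) ∪ Icc (1 / 2) 2 → ∀ j, iteratedDeriv j m x = 0 :=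
    fun x hx j => iteratedDeriv_eq_zero_of_notMem_tsupport j
      fun hxm => hx (closure_minimal hsupp (isClosed_Icc.union isClosed_Icc) hxm)
  have hsupp₂ : support m ⊆ Icc (-2) 2 :=
    hsupp.trans (union_subset (Icc_subset_Icc le_rfl (by norm_num))
      (Icc_subset_Icc (by norm_num) le_rfl))
  have hint : Integrable fun x => chirp A B x * m x := integrable_chirp_mul hm.continuous
    (HasCompactSupport.of_support_subset_isCompact isCompact_Icc hsupp₂)
  have hsupp₃ : support (fun x => chirp A B x * m x) ⊆ Ioc (-3) 3 :=
    (support_mul_subset_right _ _).trans (hsupp₂.trans (Icc_subset_Ioc (by norm_num) (by norm_num)))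
  have hmid : ∫ x in (-1 / 4 : ℝ)..(1 / 4), chirp A B x * m x = 0 := by
    rw [← integral_zero (a := (-1 / 4 : ℝ)) (b := 1 / 4)]
    refine integral_congr fun x hx => ?_
    rw [Set.uIcc_of_le (by norm_num)] at hx
    have := hvan x (by rintro (⟨h₁, h₂⟩ | ⟨h₁, h₂⟩) <;> linarith [hx.1, hx.2]) 0
    rw [iteratedDeriv_zero] at this
    rw [this, mul_zero]
  have hneg := norm_intervalIntegral_chirp_mul_le_of_annulus (a := -3) (b := -1 / 4) (by norm_num)
    hm hmd (fun j _ => hvan _ (by norm_num) j) (fun j _ => hvan _ (by norm_num) j)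
    (fun x hx => ⟨le_abs.mpr (Or.inr (by linarith [hx.2])),
      abs_le.mpr ⟨by linarith [hx.1], by linarith [hx.2]⟩⟩) h
  have hpos := norm_intervalIntegral_chirp_mul_le_of_annulus (a := 1 / 4) (b := 3) (by norm_num)
    hm hmd (fun j _ => hvan _ (by norm_num) j) (fun j _ => hvan _ (by norm_num) j)
    (fun x hx => ⟨le_abs.mpr (Or.inl (by linarith [hx.1])),
      abs_le.mpr ⟨by linarith [hx.1], by linarith [hx.2]⟩⟩) h
  rw [integral_eq_add_add_of_support_subset hint hsupp₃ (-1 / 4) (1 / 4), hmid, add_zero]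
  refine (norm_add_le _ _).trans ((add_le_add hneg hpos).trans (le_of_eq ?_))
  ring

theorem exists_norm_integral_chirp_mul_le_of_nonstationary (d : ℕ) :
    ∃ C : ℝ, ∀ m : ℝ → ℂ, ContDiff ℝ d m →
      support m ⊆ Icc (-2) (-1 / 2) ∪ Icc (1 / 2) 2 →
      (∀ j ≤ d, ∀ x, ‖iteratedDeriv j m x‖ ≤ 1) → ∀ A B : ℝ,
      (|A| < |B| / 10 ∨ 10 * |B| < |A|) →
      ‖∫ x, chirp A B x * m x‖ ≤ C * (1 + |A| + |B|) ^ (-(d : ℝ)) := by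
  refine ⟨2 ^ (d : ℝ) * max 6 (11 / 2 * (∑ j ∈ range (d + 1), |(ibpCoeff d j : ℝ)|) * 32 ^ d),
    fun m hm hsupp hmd A B h => ?_⟩
  have hm₀ : ∀ x, ‖m x‖ ≤ 1 := fun x => by simpa using hmd 0 (Nat.zero_le d) x
  rw [add_assoc]
  refine le_mul_one_add_rpow_neg (norm_nonneg _) (by positivity) (Nat.cast_nonneg d)
    ((norm_integral_chirp_mul_le (a := -3) (b := 3) ?_ hm₀).trans_eq (by norm_num)) fun hs => ?_
  · exact hsupp.trans (union_subset (Icc_subset_Ioc (by norm_num) (by norm_num))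
      (Icc_subset_Ioc (by norm_num) (by norm_num)))
  · rw [Real.rpow_neg (by positivity), Real.rpow_natCast, ← div_eq_mul_inv]
    exact norm_integral_chirp_mul_le_of_nonstationary hm hsupp hmd h

theorem oscillatory_bound_Ke30_general (d : ℕ) :
    ∃ C : ℝ, ∀ m : ℝ → ℂ, ContDiff ℝ (d + 2 : ℕ) m →
      (Function.support m ⊆ Set.Icc (-2 : ℝ) (-1/2) ∪ Set.Icc (1/2 : ℝ) 2) →
      (∀ α : ℕ, α ≤ d + 2 → ∀ l : ℝ, ‖iteratedDeriv α m l‖ ≤ 1) →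
      ∀ A B : ℝ,
        ((B ≠ 0 → 1/10 ≤ |A / B| → |A / B| ≤ 10 →
            ‖∫ l : ℝ, Complex.exp (Complex.I * ((A : ℂ) * (l : ℂ) ^ 2 + (B : ℂ) * (l : ℂ))) *
                m l‖ ≤ C * (1 + |A|) ^ (-(1 : ℝ) / 2)) ∧
         ((|A| < |B| / 10 ∨ |A| > 10 * |B|) →
            ‖∫ l : ℝ, Complex.exp (Complex.I * ((A : ℂ) * (l : ℂ) ^ 2 + (B : ℂ) * (l : ℂ))) *
                m l‖ ≤ C * (1 + |A| + |B|) ^ (-(d : ℝ)))) := by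
  obtain ⟨C₁, hC₁⟩ := exists_norm_integral_chirp_mul_le_of_stationary
  obtain ⟨C₂, hC₂⟩ := exists_norm_integral_chirp_mul_le_of_nonstationary d
  refine ⟨max C₁ C₂, fun m hm hsupp hmb A B => ⟨fun hB hAB _ => ?_, fun h => ?_⟩⟩
  · have hB' : |B| ≤ 10 * |A| := by
      rw [abs_div, le_div_iff₀ (abs_pos.mpr hB)] at hAB
      linarith
    refine (hC₁ m (hm.of_le (by norm_cast; omega))
      (hsupp.trans (union_subset (Icc_subset_Icc le_rfl (by norm_num))
        (Icc_subset_Icc (by norm_num) le_rfl)))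
      (fun x => by simpa using hmb 0 (by omega) x) (fun x => by simpa using hmb 1 (by omega) x)
      A B hB').trans ?_
    gcongr
    exact le_max_left _ _
  · refine (hC₂ m (hm.of_le (by norm_cast; omega)) hsupp (fun j hj => hmb j (by omega)) A B
      h).trans ?_
    gcongr
    exact le_max_right _ _

/-- For every `d ≥ 1` there is a constant `C` (depending only on `d`)
such that for every `(d+2)`-times continuously differentiable `m : ℝ → ℂ` supported
in `[-2,-1/2] ∪ [1/2,2]` with `|m^{(α)}| ≤ 1` for `0 ≤ α ≤ d+2`, and all reals
`A`, `B`: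
(i) if `B ≠ 0` and `1/10 ≤ |A/B| ≤ 10` then
    `|∫ e^{i(Aλ²+Bλ)} m(λ) dλ| ≤ C (1+|A|)^{-1/2}`;
(ii) if `|A| < |B|/10` or `|A| > 10|B|` then
    `|∫ e^{i(Aλ²+Bλ)} m(λ) dλ| ≤ C (1+|A|+|B|)^{-d}`. -/
theorem oscillatory_bound_Ke30 (d : ℕ) (hd : 1 ≤ d) :
    ∃ C : ℝ, ∀ m : ℝ → ℂ, ContDiff ℝ (d + 2 : ℕ) m →
      (Function.support m ⊆ Set.Icc (-2 : ℝ) (-1/2) ∪ Set.Icc (1/2 : ℝ) 2) →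
      (∀ α : ℕ, α ≤ d + 2 → ∀ l : ℝ, ‖iteratedDeriv α m l‖ ≤ 1) →
      ∀ A B : ℝ,
        ((B ≠ 0 → 1/10 ≤ |A / B| → |A / B| ≤ 10 →
            ‖∫ l : ℝ, Complex.exp (Complex.I * ((A : ℂ) * (l : ℂ) ^ 2 + (B : ℂ) * (l : ℂ))) *
                m l‖ ≤ C * (1 + |A|) ^ (-(1 : ℝ) / 2)) ∧
         ((|A| < |B| / 10 ∨ |A| > 10 * |B|) →
            ‖∫ l : ℝ, Complex.exp (Complex.I * ((A : ℂ) * (l : ℂ) ^ 2 + (B : ℂ) * (l : ℂ))) *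
                m l‖ ≤ C * (1 + |A| + |B|) ^ (-(d : ℝ)))) :=
  oscillatory_bound_Ke30_general d
end

section
/- For every integer d ≥ 2 there exist a constant C > 0 and a function ã : [0,∞) → ℝ, continuous on [0,∞) and twice continuously differentiable on (0,∞), with the following properties: ã(0) = 0; ã'(r) → 0 as r → 0+; ã(r) ≥ 0, ã'(r) ≥ 0, and ã''(r) ≥ 0 for all r > 0; ã'(r) ≤ C min(1, r) for all r > 0; and ã''(r) + (d−1) (cosh r / sinh r) ã'(r) = 1 for all r > 0. -/
/-! With `n = d - 1`, take `ã' = g := F / sinh ^ n`, where `F r = ∫₀^r sinh ^ n` (the ratio of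
the volume of a hyperbolic ball to the area of its boundary sphere), and `ã r = ∫₀^r g`; the
equation is `(sinh ^ n · g)' = sinh ^ n`. The bound `|F r| ≤ |r| |sinh r| ^ n` gives
`|g r| ≤ |r|`, hence continuity at `0`. The bound `n cosh F ≤ sinh ^ (n + 1)`, obtained since
`sinh ^ (n + 1) / cosh - n F` vanishes at `0` and has derivative `sinh ^ n / cosh ^ 2 ≥ 0`, says
exactly that `ã'' = 1 - n coth · g ≥ 0`, and as `coth ≥ 1` it also gives `g ≤ 1`. -/

namespace HyperbolicRadial

open Real Set intervalIntegral

noncomputable def sinhPowIntegral (n : ℕ) (r : ℝ) : ℝ := ∫ t in (0 : ℝ)..r, sinh t ^ n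

noncomputable def radialSlope (n : ℕ) (r : ℝ) : ℝ := sinhPowIntegral n r / sinh r ^ n

noncomputable def radialPotential (n : ℕ) (r : ℝ) : ℝ := ∫ t in (0 : ℝ)..r, radialSlope n t

variable (n : ℕ) {r : ℝ}

theorem hasDerivAt_sinhPowIntegral (r : ℝ) : HasDerivAt (sinhPowIntegral n) (sinh r ^ n) r :=
  ((continuous_sinh.pow n).integral_hasStrictDerivAt 0 r).hasDerivAt

theorem sinhPowIntegral_nonneg (hr : 0 ≤ r) : 0 ≤ sinhPowIntegral n r :=
  integral_nonneg hr fun _ ht => pow_nonneg (sinh_nonneg_iff.2 ht.1) n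

theorem abs_sinhPowIntegral_le (r : ℝ) : |sinhPowIntegral n r| ≤ |sinh r| ^ n * |r| := by
  have key := norm_integral_le_of_norm_le_const (a := 0) (b := r) (C := |sinh r| ^ n)
    (f := fun t => sinh t ^ n) fun t ht => by
      have ht' : |t| ≤ |r| := by simpa using abs_sub_left_of_mem_uIcc (uIoc_subset_uIcc ht)
      simpa [norm_pow, abs_sinh] using pow_le_pow_left₀ (sinh_nonneg_iff.2 (abs_nonneg t))
        (sinh_le_sinh.2 ht') n
  simpa [sinhPowIntegral] using key

theorem mul_cosh_mul_sinhPowIntegral_le (hr : 0 ≤ r) :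
    n * cosh r * sinhPowIntegral n r ≤ sinh r ^ (n + 1) := by
  set φ : ℝ → ℝ := fun x => sinh x ^ (n + 1) / cosh x - n * sinhPowIntegral n x
  have hφ : ∀ x, HasDerivAt φ (sinh x ^ n / cosh x ^ 2) x := by
    intro x
    refine ((((hasDerivAt_sinh x).pow (n + 1)).div (hasDerivAt_cosh x) (cosh_pos x).ne').sub
      ((hasDerivAt_sinhPowIntegral n x).const_mul (n : ℝ))).congr_deriv ?_
    simp only [Pi.pow_apply, Nat.add_sub_cancel]
    field_simp
    push_cast
    linear_combination sinh x ^ n * cosh_sq x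
  have hmono : MonotoneOn φ (Ici 0) :=
    monotoneOn_of_deriv_nonneg (convex_Ici 0)
      (fun x _ => (hφ x).continuousAt.continuousWithinAt)
      (fun x _ => (hφ x).differentiableAt.differentiableWithinAt)
      fun x hx => by
        rw [interior_Ici] at hx
        rw [(hφ x).deriv]
        exact div_nonneg (pow_nonneg (sinh_nonneg_iff.2 hx.le) n) (sq_nonneg _)
  have hφ0 : φ 0 = 0 := by simp [φ, sinhPowIntegral]
  have key : n * sinhPowIntegral n r ≤ sinh r ^ (n + 1) / cosh r := by
    simpa [φ, hφ0, sub_nonneg] using hmono self_mem_Ici hr hr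
  rwa [le_div_iff₀ (cosh_pos r), mul_right_comm] at key

theorem hasDerivAt_radialSlope (hr : r ≠ 0) :
    HasDerivAt (radialSlope n) (1 - n * (cosh r / sinh r) * radialSlope n r) r := by
  have hs : sinh r ≠ 0 := sinh_ne_zero.2 hr
  refine ((hasDerivAt_sinhPowIntegral n r).div ((hasDerivAt_sinh r).pow n)
    (pow_ne_zero n hs)).congr_deriv ?_
  rcases n with _ | m
  · simp
  · simp only [radialSlope, Pi.pow_apply, Nat.add_sub_cancel]
    field_simp
    push_cast
    ring

theorem radialSlope_zero : radialSlope n 0 = 0 := by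
  simp [radialSlope, sinhPowIntegral]

theorem abs_radialSlope_le (r : ℝ) : |radialSlope n r| ≤ |r| := by
  rcases eq_or_ne r 0 with rfl | hr
  · simp [radialSlope_zero]
  · have hs : 0 < |sinh r| ^ n := pow_pos (abs_pos.2 (sinh_ne_zero.2 hr)) n
    rw [radialSlope, abs_div, abs_pow, div_le_iff₀ hs, mul_comm]
    exact abs_sinhPowIntegral_le n r

theorem radialSlope_le_self (hr : 0 ≤ r) : radialSlope n r ≤ r :=
  (le_abs_self _).trans ((abs_radialSlope_le n r).trans_eq (abs_of_nonneg hr))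

theorem continuous_radialSlope : Continuous (radialSlope n) := by
  refine continuous_iff_continuousAt.2 fun r => ?_
  rcases eq_or_ne r 0 with rfl | hr
  · rw [ContinuousAt, radialSlope_zero, tendsto_zero_iff_abs_tendsto_zero]
    exact squeeze_zero (fun _ => abs_nonneg _) (abs_radialSlope_le n)
      (by simpa using continuous_abs.tendsto (0 : ℝ))
  · exact (hasDerivAt_radialSlope n hr).continuousAt

theorem radialSlope_nonneg (hr : 0 ≤ r) : 0 ≤ radialSlope n r :=
  div_nonneg (sinhPowIntegral_nonneg n hr) (pow_nonneg (sinh_nonneg_iff.2 hr) n)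

theorem mul_coth_mul_radialSlope_le_one (hr : 0 < r) :
    n * (cosh r / sinh r) * radialSlope n r ≤ 1 := by
  have hs : 0 < sinh r := sinh_pos_iff.2 hr
  have h : n * (cosh r / sinh r) * radialSlope n r
      = n * cosh r * sinhPowIntegral n r / sinh r ^ (n + 1) := by
    rw [radialSlope, pow_succ]
    field_simp
  rw [h, div_le_one (pow_pos hs (n + 1))]
  exact mul_cosh_mul_sinhPowIntegral_le n hr.le

theorem radialSlope_le_one (hn : n ≠ 0) (hr : 0 < r) : radialSlope n r ≤ 1 := by
  have hcoth : 1 ≤ n * (cosh r / sinh r) :=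
    one_le_mul_of_one_le_of_one_le (Nat.one_le_cast.2 (Nat.one_le_iff_ne_zero.2 hn))
      ((one_le_div (sinh_pos_iff.2 hr)).2 (sinh_lt_cosh r).le)
  exact (le_mul_of_one_le_left (radialSlope_nonneg n hr.le) hcoth).trans
    (mul_coth_mul_radialSlope_le_one n hr)

theorem contDiffOn_radialSlope : ContDiffOn ℝ 1 (radialSlope n) {0}ᶜ := by
  rw [show (1 : WithTop ℕ∞) = 0 + 1 from rfl,
    contDiffOn_succ_iff_deriv_of_isOpen isOpen_compl_singleton]
  refine ⟨fun x hx => (hasDerivAt_radialSlope n hx).differentiableAt.differentiableWithinAt,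
    by simp, contDiffOn_zero.2 ?_⟩
  refine ContinuousOn.congr ?_ fun x hx => (hasDerivAt_radialSlope n hx).deriv
  exact continuousOn_const.sub ((continuousOn_const.mul (continuous_cosh.continuousOn.div
    continuous_sinh.continuousOn fun x hx => sinh_ne_zero.2 hx)).mul
    (continuous_radialSlope n).continuousOn)

theorem hasDerivAt_radialPotential (r : ℝ) :
    HasDerivAt (radialPotential n) (radialSlope n r) r :=
  ((continuous_radialSlope n).integral_hasStrictDerivAt 0 r).hasDerivAt

theorem deriv_radialPotential : deriv (radialPotential n) = radialSlope n :=
  funext fun r => (hasDerivAt_radialPotential n r).deriv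

theorem contDiffOn_radialPotential : ContDiffOn ℝ 2 (radialPotential n) {0}ᶜ := by
  rw [show (2 : WithTop ℕ∞) = 1 + 1 from rfl,
    contDiffOn_succ_iff_deriv_of_isOpen isOpen_compl_singleton, deriv_radialPotential]
  exact ⟨fun x _ => (hasDerivAt_radialPotential n x).differentiableAt.differentiableWithinAt,
    by simp, contDiffOn_radialSlope n⟩

theorem radialPotential_nonneg (hr : 0 ≤ r) : 0 ≤ radialPotential n r :=
  integral_nonneg hr fun _ ht => radialSlope_nonneg n ht.1

end HyperbolicRadial

open Filter

open HyperbolicRadial in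
/-- For every `d ≥ 2` there exist `C > 0` and a function
`ã : [0,∞) → ℝ`, continuous on `[0,∞)` and twice continuously differentiable on
`(0,∞)`, with `ã(0) = 0`, `ã'(r) → 0` as `r → 0+`, `ã, ã', ã'' ≥ 0` on `(0,∞)`,
`ã'(r) ≤ C min(1,r)` for `r > 0`, and
`ã''(r) + (d−1)(cosh r / sinh r) ã'(r) = 1` for all `r > 0`. -/
theorem exists_radial_a (d : ℕ) (hd : 2 ≤ d) :
    ∃ C : ℝ, 0 < C ∧ ∃ a : ℝ → ℝ,
      ContinuousOn a (Set.Ici 0) ∧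
      ContDiffOn ℝ 2 a (Set.Ioi 0) ∧
      a 0 = 0 ∧
      Tendsto (deriv a) (nhdsWithin 0 (Set.Ioi 0)) (nhds 0) ∧
      (∀ r : ℝ, 0 < r → 0 ≤ a r) ∧
      (∀ r : ℝ, 0 < r → 0 ≤ deriv a r) ∧
      (∀ r : ℝ, 0 < r → 0 ≤ deriv (deriv a) r) ∧
      (∀ r : ℝ, 0 < r → deriv a r ≤ C * min 1 r) ∧
      (∀ r : ℝ, 0 < r →
        deriv (deriv a) r + ((d : ℝ) - 1) * (Real.cosh r / Real.sinh r) * deriv a r = 1) := by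
  obtain ⟨n, rfl⟩ : ∃ n, d = n + 1 := ⟨d - 1, by omega⟩
  have hn : n ≠ 0 := by omega
  have hcurv : ∀ r : ℝ, 0 < r →
      deriv (deriv (radialPotential n)) r
        = 1 - n * (Real.cosh r / Real.sinh r) * radialSlope n r :=
    fun r hr => by rw [deriv_radialPotential, (hasDerivAt_radialSlope n hr.ne').deriv]
  refine ⟨1, one_pos, radialPotential n, ?_, ?_, ?_, ?_, ?_, ?_, ?_, ?_, ?_⟩
  · exact (continuous_iff_continuousAt.2 fun r =>
      (hasDerivAt_radialPotential n r).continuousAt).continuousOn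
  · exact (contDiffOn_radialPotential n).mono fun r hr => ne_of_gt hr
  · simp [radialPotential]
  · rw [deriv_radialPotential]
    simpa only [radialSlope_zero] using
      ((continuous_radialSlope n).tendsto 0).mono_left (nhdsWithin_le_nhds (s := Set.Ioi 0))
  · exact fun r hr => radialPotential_nonneg n hr.le
  · exact fun r hr => (deriv_radialPotential n).symm ▸ radialSlope_nonneg n hr.le
  · exact fun r hr => (hcurv r hr).symm ▸ sub_nonneg.2 (mul_coth_mul_radialSlope_le_one n hr)
  · intro r hr
    rw [deriv_radialPotential, one_mul]
    exact le_min (radialSlope_le_one n hn hr) (radialSlope_le_self n hr.le)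
  · intro r hr
    rw [hcurv r hr, deriv_radialPotential]
    push_cast
    ring
end

section
/- For every integer d ≥ 2 and every real number r ≥ 0, one has (d−1) cosh(r) · ∫₀^r sinh(s)^{d−1} ds ≤ sinh(r)^d. -/
/-!
The function `x ↦ sinh x ^ (n + 1) / cosh x - n * ∫₀ˣ sinh s ^ n ds` vanishes at `0` and, because
`cosh² - sinh² = 1`, has derivative `sinh x ^ n / cosh x ^ 2`, which is nonnegative for `x ≥ 0`.
Hence it is nonnegative on `[0, ∞)`, and multiplying by `cosh r > 0` gives the inequality.
-/

open Real Set

noncomputable def sinhPowDefect (n : ℕ) (x : ℝ) : ℝ :=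
  sinh x ^ (n + 1) / cosh x - n * ∫ s in (0 : ℝ)..x, sinh s ^ n

theorem hasDerivAt_sinhPowDefect (n : ℕ) (x : ℝ) :
    HasDerivAt (sinhPowDefect n) (sinh x ^ n / cosh x ^ 2) x := by
  have hpow : HasDerivAt (fun x => sinh x ^ (n + 1)) ((n + 1 : ℕ) * sinh x ^ n * cosh x) x := by
    simpa using (hasDerivAt_sinh x).fun_pow (n + 1)
  have hint : HasDerivAt (fun x => ∫ s in (0 : ℝ)..x, sinh s ^ n) (sinh x ^ n) x :=
    ((continuous_sinh.pow n).integral_hasStrictDerivAt 0 x).hasDerivAt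
  have hc : cosh x ≠ 0 := (cosh_pos x).ne'
  have hquot : HasDerivAt (sinhPowDefect n) (((n + 1 : ℕ) * sinh x ^ n * cosh x * cosh x -
      sinh x ^ (n + 1) * sinh x) / cosh x ^ 2 - n * sinh x ^ n) x :=
    (hpow.div (hasDerivAt_cosh x) hc).sub (hint.const_mul (n : ℝ))
  refine hquot.congr_deriv ?_
  field_simp
  push_cast
  linear_combination sinh x ^ n * cosh_sq_sub_sinh_sq x

theorem sinhPowDefect_zero (n : ℕ) : sinhPowDefect n 0 = 0 := by
  simp [sinhPowDefect]

theorem monotoneOn_sinhPowDefect (n : ℕ) : MonotoneOn (sinhPowDefect n) (Ici 0) := by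
  have hdiff x : DifferentiableAt ℝ (sinhPowDefect n) x :=
    (hasDerivAt_sinhPowDefect n x).differentiableAt
  refine monotoneOn_of_deriv_nonneg (convex_Ici 0)
    (fun x _ => (hdiff x).continuousAt.continuousWithinAt)
    (fun x _ => (hdiff x).differentiableWithinAt) fun x hx => ?_
  have hsinh : 0 ≤ sinh x := sinh_nonneg_iff.2 (interior_subset hx)
  rw [(hasDerivAt_sinhPowDefect n x).deriv]
  positivity

theorem mul_cosh_mul_integral_sinh_pow_le (n : ℕ) {r : ℝ} (hr : 0 ≤ r) :
    n * cosh r * (∫ s in (0 : ℝ)..r, sinh s ^ n) ≤ sinh r ^ (n + 1) := by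
  have hdefect : 0 ≤ sinhPowDefect n r :=
    sinhPowDefect_zero n ▸ monotoneOn_sinhPowDefect n self_mem_Ici hr hr
  rw [sinhPowDefect, sub_nonneg, le_div_iff₀ (cosh_pos r)] at hdefect
  linarith

/-- For every integer `d ≥ 2` and every real `r ≥ 0`,
`(d−1) cosh(r) · ∫₀^r sinh(s)^{d−1} ds ≤ sinh(r)^d`. -/
theorem key_integral_inequality (d : ℕ) (hd : 2 ≤ d) (r : ℝ) (hr : 0 ≤ r) :
    ((d : ℝ) - 1) * Real.cosh r * (∫ s in (0 : ℝ)..r, Real.sinh s ^ (d - 1)) ≤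
      Real.sinh r ^ d := by
  obtain ⟨n, rfl⟩ : ∃ n, d = n + 1 := ⟨d - 1, by omega⟩
  simpa using mul_cosh_mul_integral_sinh_pow_le n hr
end

section
/- For every integer d ≥ 2 there exists a constant C, depending only on d, such that for all r ≥ 0, ∫₀^π (cosh r − sinh r · cos θ)^{-(d-1)/2} (sin θ)^{d-2} dθ ≤ C e^{-(d-1)r/2} (1 + r). -/
/-!
Writing `u(θ) = cosh r - sinh r cos θ = e^{-r} cos²(θ/2) + e^{r} sin²(θ/2)` gives
`u ≥ e^{-r}` and `u ≥ e^{r} sin²(θ/2)`. With `n = d - 2` and `ρ = (n + 1)/2`, the first bound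
makes the integrand at most `e^{ρr} θⁿ` on `[0, e^{-r}]`, which integrates to `e^{-ρr}`. The
second, together with `sin θ ≤ 2 sin(θ/2)` and Jordan's inequality `sin(θ/2) ≥ θ/π`, makes it
at most `2ⁿ π e^{-ρr} / θ` on `[e^{-r}, π]`, which integrates to `2ⁿ π e^{-ρr} (log π + r)`.
-/

open Real intervalIntegral Set MeasureTheory

theorem cosh_sub_sinh_mul_cos_eq (r θ : ℝ) :
    cosh r - sinh r * cos θ = exp (-r) * cos (θ / 2) ^ 2 + exp r * sin (θ / 2) ^ 2 := by
  rw [sin_sq, cos_sq, mul_div_cancel₀ θ two_ne_zero, cosh_eq, sinh_eq]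
  ring

theorem exp_neg_le_cosh_sub_sinh_mul_cos {r : ℝ} (hr : 0 ≤ r) (θ : ℝ) :
    exp (-r) ≤ cosh r - sinh r * cos θ := by
  have hexp : exp (-r) ≤ exp r := exp_le_exp.mpr (by linarith)
  rw [cosh_sub_sinh_mul_cos_eq]
  linear_combination -exp (-r) * cos_sq_add_sin_sq (θ / 2) +
    mul_le_mul_of_nonneg_right hexp (sq_nonneg (sin (θ / 2)))

theorem exp_mul_sin_half_sq_le_cosh_sub_sinh_mul_cos (r θ : ℝ) :
    exp r * sin (θ / 2) ^ 2 ≤ cosh r - sinh r * cos θ := by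
  rw [cosh_sub_sinh_mul_cos_eq]
  exact le_add_of_nonneg_left (by positivity)

theorem cosh_sub_sinh_mul_cos_pos (r θ : ℝ) : 0 < cosh r - sinh r * cos θ := by
  have h : (sinh r * cos θ) ^ 2 < cosh r ^ 2 := by
    nlinarith [cosh_sq r, cos_sq_le_one θ, sq_nonneg (sinh r)]
  exact sub_pos.mpr (abs_lt_of_sq_lt_sq' h (cosh_pos r).le).2

theorem integral_le_mul_add_mul_log {f : ℝ → ℝ} {a b M K : ℝ} (ha : 0 < a) (hab : a ≤ b)
    (hf : IntervalIntegrable f volume 0 b) (h_near : ∀ θ ∈ Icc 0 a, f θ ≤ M)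
    (h_far : ∀ θ ∈ Icc a b, f θ ≤ K / θ) :
    ∫ θ in 0..b, f θ ≤ M * a + K * log (b / a) := by
  have hf₀ : IntervalIntegrable f volume 0 a :=
    hf.mono_set (uIcc_subset_uIcc_left (by simp [uIcc_of_le, ha.le, hab, ha.le.trans hab]))
  have hf₁ : IntervalIntegrable f volume a b :=
    hf.mono_set (uIcc_subset_uIcc_right (by simp [uIcc_of_le, ha.le, hab, ha.le.trans hab]))
  have h_inv : IntervalIntegrable (fun θ => K / θ) volume a b := by
    refine (continuousOn_const.div continuousOn_id fun θ hθ => ?_).intervalIntegrable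
    rw [uIcc_of_le hab] at hθ
    exact (ha.trans_le hθ.1).ne'
  calc ∫ θ in 0..b, f θ = (∫ θ in 0..a, f θ) + ∫ θ in a..b, f θ :=
        (integral_add_adjacent_intervals hf₀ hf₁).symm
    _ ≤ (∫ _ in 0..a, M) + ∫ θ in a..b, K / θ := by
        gcongr
        · exact integral_mono_on ha.le hf₀ intervalIntegrable_const h_near
        · exact integral_mono_on hab hf₁ h_inv h_far
    _ = M * a + K * log (b / a) := by
        simp_rw [intervalIntegral.integral_const, div_eq_mul_inv,
          intervalIntegral.integral_const_mul, integral_inv_of_pos ha (ha.trans_le hab)]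
        simp [mul_comm, div_eq_mul_inv]

theorem cosh_sub_sinh_mul_cos_rpow_neg_le_exp {r ρ : ℝ} (hr : 0 ≤ r) (hρ : 0 ≤ ρ) (θ : ℝ) :
    (cosh r - sinh r * cos θ) ^ (-ρ) ≤ exp (ρ * r) :=
  calc (cosh r - sinh r * cos θ) ^ (-ρ) ≤ exp (-r) ^ (-ρ) :=
        rpow_le_rpow_of_nonpos (exp_pos _) (exp_neg_le_cosh_sub_sinh_mul_cos hr θ) (by linarith)
    _ = exp (ρ * r) := by rw [← exp_mul]; ring_nf

theorem cosh_sub_sinh_mul_cos_rpow_neg_le_inv (n : ℕ) (r : ℝ) {θ : ℝ} (hs : 0 < sin (θ / 2)) :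
    (cosh r - sinh r * cos θ) ^ (-(((n : ℝ) + 1) / 2)) ≤
      (exp (((n : ℝ) + 1) / 2 * r) * sin (θ / 2) ^ (n + 1))⁻¹ :=
  calc (cosh r - sinh r * cos θ) ^ (-(((n : ℝ) + 1) / 2))
      ≤ (exp r * sin (θ / 2) ^ 2) ^ (-(((n : ℝ) + 1) / 2)) :=
        rpow_le_rpow_of_nonpos (by positivity)
          (exp_mul_sin_half_sq_le_cosh_sub_sinh_mul_cos r θ)
          (by linarith [n.cast_nonneg (α := ℝ)])
    _ = (exp (((n : ℝ) + 1) / 2 * r) * sin (θ / 2) ^ (n + 1))⁻¹ := by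
        rw [rpow_neg (by positivity), mul_rpow (exp_pos r).le (by positivity), ← exp_mul,
          ← rpow_natCast, ← rpow_natCast, ← rpow_mul hs.le]
        push_cast
        ring_nf

theorem cosh_sub_sinh_mul_cos_rpow_neg_mul_sin_pow_le_exp_mul_pow {r ρ θ : ℝ} (n : ℕ)
    (hr : 0 ≤ r) (hρ : 0 ≤ ρ) (hθ : θ ∈ Icc 0 π) :
    (cosh r - sinh r * cos θ) ^ (-ρ) * sin θ ^ n ≤ exp (ρ * r) * θ ^ n := by
  have hsin : 0 ≤ sin θ := sin_nonneg_of_nonneg_of_le_pi hθ.1 hθ.2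
  gcongr
  · exact cosh_sub_sinh_mul_cos_rpow_neg_le_exp hr hρ θ
  · exact sin_le hθ.1

theorem cosh_sub_sinh_mul_cos_rpow_neg_mul_sin_pow_le_div (n : ℕ) (r : ℝ) {θ : ℝ}
    (hθ : θ ∈ Ioc 0 π) :
    (cosh r - sinh r * cos θ) ^ (-(((n : ℝ) + 1) / 2)) * sin θ ^ n ≤
      2 ^ n * π * exp (-(((n : ℝ) + 1) / 2 * r)) / θ := by
  have hθπ : θ / π ≤ sin (θ / 2) := by
    have := mul_le_sin (x := θ / 2) (by linarith [hθ.1]) (by linarith [hθ.2])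
    calc θ / π = 2 / π * (θ / 2) := by ring
      _ ≤ sin (θ / 2) := this
  have hs : 0 < sin (θ / 2) := (div_pos hθ.1 pi_pos).trans_le hθπ
  have hsin : sin θ ≤ 2 * sin (θ / 2) := by
    rw [← mul_div_cancel₀ θ two_ne_zero, sin_two_mul, mul_div_cancel₀ θ two_ne_zero]
    nlinarith [cos_le_one (θ / 2)]
  have hsin₀ : 0 ≤ sin θ := sin_nonneg_of_nonneg_of_le_pi hθ.1.le hθ.2
  calc (cosh r - sinh r * cos θ) ^ (-(((n : ℝ) + 1) / 2)) * sin θ ^ n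
      ≤ (exp (((n : ℝ) + 1) / 2 * r) * sin (θ / 2) ^ (n + 1))⁻¹ * (2 * sin (θ / 2)) ^ n := by
        gcongr
        exact cosh_sub_sinh_mul_cos_rpow_neg_le_inv n r hs
    _ = 2 ^ n * exp (-(((n : ℝ) + 1) / 2 * r)) / sin (θ / 2) := by
        rw [exp_neg]; field_simp; ring
    _ ≤ 2 ^ n * exp (-(((n : ℝ) + 1) / 2 * r)) / (θ / π) := by
        gcongr
        exact div_pos hθ.1 pi_pos
    _ = 2 ^ n * π * exp (-(((n : ℝ) + 1) / 2 * r)) / θ := by field_simp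

theorem integral_cosh_sub_sinh_mul_cos_rpow_neg_mul_sin_pow_le (n : ℕ) {r : ℝ} (hr : 0 ≤ r) :
    ∫ θ in 0..π, (cosh r - sinh r * cos θ) ^ (-(((n : ℝ) + 1) / 2)) * sin θ ^ n ≤
      (1 + 3 * 2 ^ n * π) * exp (-(((n : ℝ) + 1) / 2 * r)) * (1 + r) := by
  set ρ : ℝ := ((n : ℝ) + 1) / 2 with hρ
  have hexp_le_pi : exp (-r) ≤ π :=
    (exp_le_one_iff.mpr (by linarith)).trans (by linarith [pi_gt_three])
  have hcont : Continuous fun θ => (cosh r - sinh r * cos θ) ^ (-ρ) * sin θ ^ n :=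
    ((by fun_prop : Continuous fun θ => cosh r - sinh r * cos θ).rpow_const
      fun θ => Or.inl (cosh_sub_sinh_mul_cos_pos r θ).ne').mul (by fun_prop)
  have hnear : ∀ θ ∈ Icc 0 (exp (-r)),
      (cosh r - sinh r * cos θ) ^ (-ρ) * sin θ ^ n ≤ exp (ρ * r) * exp (-r) ^ n := by
    intro θ hθ
    calc _ ≤ exp (ρ * r) * θ ^ n :=
          cosh_sub_sinh_mul_cos_rpow_neg_mul_sin_pow_le_exp_mul_pow n hr (by positivity)
            ⟨hθ.1, hθ.2.trans hexp_le_pi⟩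
      _ ≤ exp (ρ * r) * exp (-r) ^ n := by gcongr; exacts [hθ.1, hθ.2]
  have hfar : ∀ θ ∈ Icc (exp (-r)) π,
      (cosh r - sinh r * cos θ) ^ (-ρ) * sin θ ^ n ≤ 2 ^ n * π * exp (-(ρ * r)) / θ :=
    fun θ hθ => cosh_sub_sinh_mul_cos_rpow_neg_mul_sin_pow_le_div n r
      ⟨(exp_pos _).trans_le hθ.1, hθ.2⟩
  have hlog_pi : log π ≤ 3 := by linarith [log_le_sub_one_of_pos pi_pos, pi_lt_four]
  calc _ ≤ exp (ρ * r) * exp (-r) ^ n * exp (-r) +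
          2 ^ n * π * exp (-(ρ * r)) * log (π / exp (-r)) :=
        integral_le_mul_add_mul_log (exp_pos _) hexp_le_pi (hcont.intervalIntegrable _ _) hnear hfar
    _ = exp (-(ρ * r)) + 2 ^ n * π * exp (-(ρ * r)) * (log π + r) := by
        rw [log_div pi_pos.ne' (exp_pos _).ne', log_exp, ← exp_nat_mul, ← exp_add, ← exp_add,
          hρ]
        ring_nf
    _ ≤ (1 + 3 * 2 ^ n * π) * exp (-(ρ * r)) * (1 + r) := by
        have : 0 ≤ 2 ^ n * π * exp (-(ρ * r)) := by positivity
        nlinarith [exp_pos (-(ρ * r))]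

/-- For every integer `d ≥ 2` there is a constant `C` (depending only
on `d`) such that for all `r ≥ 0`,
`∫₀^π (cosh r − sinh r cos θ)^{-(d-1)/2} (sin θ)^{d-2} dθ ≤ C e^{-(d-1)r/2} (1+r)`. -/
theorem spherical_function_bound (d : ℕ) (hd : 2 ≤ d) :
    ∃ C : ℝ, ∀ r : ℝ, 0 ≤ r →
      (∫ θ in (0 : ℝ)..Real.pi,
          (Real.cosh r - Real.sinh r * Real.cos θ) ^ (-(((d : ℝ) - 1) / 2)) *
            Real.sin θ ^ (d - 2)) ≤
        C * Real.exp (-((d : ℝ) - 1) * r / 2) * (1 + r) := by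
  obtain ⟨n, rfl⟩ := Nat.exists_eq_add_of_le' hd
  refine ⟨1 + 3 * 2 ^ n * π, fun r hr => ?_⟩
  convert integral_cosh_sub_sinh_mul_cos_rpow_neg_mul_sin_pow_le n hr using 5 <;>
    push_cast <;> ring_nf
end
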